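/- arXiv:0810.0758 — 3 statements merged into one kernel-verified Lean document; each statement's English description precedes it below -/
import Mathlib

section
/- Under random labeling, the expected diagonal cell count of the nearest neighbor contingency table satisfies E[N_ii] = n_i(n_i − 1)/(n − 1) for every class i. -/
open Finset

section Aux

variable {V : Type*} [Fintype V] [DecidableEq V] {q : ℕ}

lemma aux_card_fiber_comp (σ : Equiv.Perm V) (ℓ : V → Fin q) (j : Fin q) :
    (univ.filter fun x => ℓ (σ x) = j).card = (univ.filter fun x => ℓ x = j).card := by
  apply Finset.card_bij (fun x _ => σ x)
  · intro a ha; simp only [mem_filter, mem_univ, true_and] at ha ⊢; exact ha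
  · intro a _ b _ h; exact σ.injective h
  · intro b hb
    simp only [mem_filter, mem_univ, true_and] at hb
    exact ⟨σ.symm b, by simp [hb], by simp⟩

lemma aux_exists_perm {x y x' y' : V} (hxy : x ≠ y) (hxy' : x' ≠ y') :
    ∃ σ : Equiv.Perm V, σ x' = x ∧ σ y' = y := by
  set σ1 := Equiv.swap x x' with hσ1
  have hy'' : σ1 y' ≠ x := by
    intro h
    apply hxy'
    have : σ1 y' = σ1 x' := by rw [h, hσ1, Equiv.swap_apply_right]
    exact (σ1.injective this).symm
  refine ⟨σ1.trans (Equiv.swap y (σ1 y')), ?_, ?_⟩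
  · simp only [Equiv.trans_apply]
    rw [hσ1, Equiv.swap_apply_right, Equiv.swap_apply_of_ne_of_ne hxy hy''.symm]
  · simp only [Equiv.trans_apply, Equiv.swap_apply_right]

lemma aux_pair_count (c : Fin q → ℕ) (i : Fin q) {x y x' y' : V}
    (hxy : x ≠ y) (hxy' : x' ≠ y') :
    (((univ.filter fun ℓ : V → Fin q => ∀ j, (univ.filter fun z => ℓ z = j).card = c j)).filter
      fun ℓ => ℓ x = i ∧ ℓ y = i).card
    = (((univ.filter fun ℓ : V → Fin q => ∀ j, (univ.filter fun z => ℓ z = j).card = c j)).filter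
      fun ℓ => ℓ x' = i ∧ ℓ y' = i).card := by
  obtain ⟨σ, hσx, hσy⟩ := aux_exists_perm hxy hxy'
  apply Finset.card_bij (fun ℓ _ => ℓ ∘ σ)
  · intro ℓ hℓ
    simp only [mem_filter, mem_univ, true_and, Function.comp] at hℓ ⊢
    refine ⟨fun j => ?_, by rw [hσx]; exact hℓ.2.1, by rw [hσy]; exact hℓ.2.2⟩
    rw [aux_card_fiber_comp σ ℓ j]; exact hℓ.1 j
  · intro a _ b _ h
    funext z
    have := congrFun h (σ.symm z)
    simpa using this
  · intro ℓ hℓ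
    simp only [mem_filter, mem_univ, true_and] at hℓ
    refine ⟨ℓ ∘ σ.symm, ?_, ?_⟩
    · simp only [mem_filter, mem_univ, true_and, Function.comp]
      refine ⟨fun j => ?_, ?_, ?_⟩
      · rw [aux_card_fiber_comp σ.symm ℓ j]; exact hℓ.1 j
      · rw [← hσx]; simpa using hℓ.2.1
      · rw [← hσy]; simpa using hℓ.2.2
    · funext z; simp [Function.comp]

/-- an equiv for fibers of sigma types over `Fin`s -/
def aux_fiberEquiv (c : Fin q → ℕ) (j : Fin q) :
    {s : Σ k : Fin q, Fin (c k) // s.1 = j} ≃ Fin (c j) where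
  toFun s := Fin.cast (congrArg c s.2) s.1.2
  invFun b := ⟨⟨j, b⟩, rfl⟩
  left_inv := by rintro ⟨⟨k, b⟩, rfl⟩; rfl
  right_inv b := rfl

lemma aux_exists_balanced (c : Fin q → ℕ) (hc : ∑ j, c j = Fintype.card V) :
    ∃ ℓ : V → Fin q, ∀ j, (univ.filter fun x => ℓ x = j).card = c j := by
  have hcard : Fintype.card V = Fintype.card (Σ j : Fin q, Fin (c j)) := by
    simp [Fintype.card_sigma, hc]
  obtain e : V ≃ Σ j : Fin q, Fin (c j) := Fintype.equivOfCardEq hcard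
  refine ⟨fun x => (e x).1, fun j => ?_⟩
  show (univ.filter fun x => (e x).1 = j).card = c j
  calc (univ.filter fun x => (e x).1 = j).card
      = Fintype.card {x // (e x).1 = j} := (Fintype.card_subtype _).symm
    _ = Fintype.card {s : Σ k : Fin q, Fin (c k) // s.1 = j} :=
        Fintype.card_congr (e.subtypeEquiv fun x => Iff.rfl)
    _ = c j := by rw [Fintype.card_congr (aux_fiberEquiv c j), Fintype.card_fin]

end Aux

/-- Under random labeling (uniform over labelings with fixed class sizes `c`),
the expected diagonal NNCT cell count satisfies
`E[N_ii] = n_i (n_i - 1) / (n - 1)`. -/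
theorem expected_diagonal_cell_count_RL
    {V : Type*} [Fintype V] [DecidableEq V]
    (nn : V → V) (hnn : ∀ x, nn x ≠ x)
    (hn : 2 ≤ Fintype.card V)
    (q : ℕ) (c : Fin q → ℕ) (hc : ∑ j, c j = Fintype.card V)
    (i : Fin q) :
    (∑ ℓ ∈ univ.filter (fun ℓ : V → Fin q =>
        ∀ j, (univ.filter (fun x => ℓ x = j)).card = c j),
      ((univ.filter (fun x => ℓ x = i ∧ ℓ (nn x) = i)).card : ℝ))
      / ((univ.filter (fun ℓ : V → Fin q =>
        ∀ j, (univ.filter (fun x => ℓ x = j)).card = c j)).card : ℝ)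
    = (c i : ℝ) * ((c i : ℝ) - 1) / ((Fintype.card V : ℝ) - 1) := by
  classical
  set n := Fintype.card V with hndef
  set B := univ.filter (fun ℓ : V → Fin q =>
      ∀ j, (univ.filter (fun x => ℓ x = j)).card = c j) with hB
  set M := B.card with hM
  -- nonemptiness of V
  have hnpos : 0 < n := lt_of_lt_of_le two_pos hn
  have : Nonempty V := Fintype.card_pos_iff.mp hnpos
  obtain ⟨x₀⟩ := this
  set y₀ := nn x₀ with hy₀
  have hx₀y₀ : x₀ ≠ y₀ := fun h => hnn x₀ h.symm
  -- the common pair count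
  set K := (B.filter fun ℓ => ℓ x₀ = i ∧ ℓ y₀ = i).card with hK
  -- S : numerator as natural number
  set S := ∑ ℓ ∈ B, (univ.filter (fun x => ℓ x = i ∧ ℓ (nn x) = i)).card with hS
  -- step 1+2 : S = n * K
  have step2 : S = n * K := by
    have step1 : S = ∑ x : V, (B.filter fun ℓ => ℓ x = i ∧ ℓ (nn x) = i).card := by
      rw [hS]
      simp_rw [Finset.card_filter]
      exact Finset.sum_comm
    rw [step1]
    have : ∀ x : V, (B.filter fun ℓ => ℓ x = i ∧ ℓ (nn x) = i).card = K := by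
      intro x
      rw [hK]
      exact aux_pair_count c i (fun h => hnn x h.symm) hx₀y₀
    rw [Finset.sum_congr rfl (fun x _ => this x), Finset.sum_const, smul_eq_mul]
    rfl
  -- step 3+4 : (n*n - n) * K = M * (c i * c i - c i)
  have step34 : (n * n - n) * K = M * (c i * c i - c i) := by
    have lhs_eq : ∑ p ∈ univ.offDiag, (B.filter fun ℓ => ℓ p.1 = i ∧ ℓ p.2 = i).card
        = (n * n - n) * K := by
      have : ∀ p ∈ (univ : Finset V).offDiag,
          (B.filter fun ℓ => ℓ p.1 = i ∧ ℓ p.2 = i).card = K := by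
        intro p hp
        rw [Finset.mem_offDiag] at hp
        exact aux_pair_count c i hp.2.2 hx₀y₀
      rw [Finset.sum_congr rfl this, Finset.sum_const, smul_eq_mul,
        Finset.offDiag_card, Finset.card_univ]
    have rhs_eq : ∑ p ∈ univ.offDiag, (B.filter fun ℓ => ℓ p.1 = i ∧ ℓ p.2 = i).card
        = M * (c i * c i - c i) := by
      have swap : ∑ p ∈ univ.offDiag, (B.filter fun ℓ => ℓ p.1 = i ∧ ℓ p.2 = i).card
          = ∑ ℓ ∈ B, (univ.offDiag.filter fun p : V × V => ℓ p.1 = i ∧ ℓ p.2 = i).card := by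
        simp_rw [Finset.card_filter]
        exact Finset.sum_comm
      rw [swap]
      have : ∀ ℓ ∈ B, (univ.offDiag.filter fun p : V × V => ℓ p.1 = i ∧ ℓ p.2 = i).card
          = c i * c i - c i := by
        intro ℓ hℓ
        rw [hB, mem_filter] at hℓ
        have hfib : (univ.filter fun x => ℓ x = i).card = c i := hℓ.2 i
        have hset : univ.offDiag.filter (fun p : V × V => ℓ p.1 = i ∧ ℓ p.2 = i)
            = (univ.filter fun x => ℓ x = i).offDiag := by
          ext p
          simp only [Finset.mem_filter, Finset.mem_offDiag, mem_univ, true_and]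
          tauto
        rw [hset, Finset.offDiag_card, hfib]
      rw [Finset.sum_congr rfl this, Finset.sum_const, smul_eq_mul]
    rw [← lhs_eq, rhs_eq]
  -- key nat identity : (n-1) * S = M * (c i * c i - c i)
  have key : (n - 1) * S = M * (c i * c i - c i) := by
    rw [step2, ← mul_assoc, ← step34]
    congr 1
    rw [Nat.sub_one_mul]
  -- M positive
  have hMpos : 0 < M := by
    obtain ⟨ℓ₀, hℓ₀⟩ := aux_exists_balanced c hc
    refine Finset.card_pos.mpr ⟨ℓ₀, ?_⟩
    rw [hB, mem_filter]; exact ⟨mem_univ _, hℓ₀⟩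
  -- move to reals
  have hMne : (M : ℝ) ≠ 0 := Nat.cast_ne_zero.mpr hMpos.ne'
  have hn1ne : (n : ℝ) - 1 ≠ 0 := by
    have : (2 : ℝ) ≤ n := by exact_mod_cast hn
    linarith
  have hcile : c i ≤ c i * c i := by
    rcases Nat.eq_zero_or_pos (c i) with h | h
    · simp [h]
    · exact Nat.le_mul_of_pos_left _ h
  have keyR : ((n : ℝ) - 1) * S = M * ((c i : ℝ) * c i - c i) := by
    have := congrArg (fun m : ℕ => (m : ℝ)) key
    push_cast [Nat.cast_sub (Nat.one_le_iff_ne_zero.mpr hnpos.ne'), Nat.cast_sub hcile] at this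
    convert this using 2 <;> push_cast <;> ring
  have hnum : (∑ ℓ ∈ B, ((univ.filter (fun x => ℓ x = i ∧ ℓ (nn x) = i)).card : ℝ)) = (S : ℝ) := by
    rw [hS]; push_cast; ring
  rw [hnum]
  field_simp
  linear_combination keyR
end

section
/- Under random labeling, the expected off-diagonal cell count of the nearest neighbor contingency table satisfies E[N_ij] = n_i·n_j/(n − 1) for all classes i ≠ j. -/
open Finset

/-! Let `L` be the set of labelings with class sizes `n_k`. Precomposing with a permutation of `V`
preserves `L`, and `Equiv.Perm V` moves any ordered pair of distinct points to any other, so the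
number `A` of `ℓ ∈ L` with `ℓ a = i` and `ℓ b = j` is the same for all `a ≠ b`. Since `i ≠ j`,
each `ℓ ∈ L` has exactly `n_i n_j` ordered pairs of distinct points labelled `(i, j)`, so counting
over the `n (n - 1)` ordered pairs gives `n (n - 1) A = |L| n_i n_j`, while summing `N_ij` over `L`
gives `n A`, one `A` for each pair `(x, nn x)`. -/

def labelingsWithClassSizes {V β : Type*} [Fintype V] [DecidableEq V] [Fintype β]
    [DecidableEq β] (c : β → ℕ) : Finset (V → β) :=
  {ℓ | ∀ k, #{x | ℓ x = k} = c k}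

def cellCount {V β : Type*} [Fintype V] [DecidableEq β] (nn : V → V) (i j : β) (ℓ : V → β) : ℕ :=
  #{x | ℓ x = i ∧ ℓ (nn x) = j}

def pairCount {V β : Type*} [Fintype V] [DecidableEq V] [Fintype β] [DecidableEq β]
    (c : β → ℕ) (i j : β) (a b : V) : ℕ :=
  #{ℓ ∈ labelingsWithClassSizes c | ℓ a = i ∧ ℓ b = j}

theorem filter_offDiag_eq_product {V β : Type*} [Fintype V] [DecidableEq V] [DecidableEq β]
    (ℓ : V → β) {i j : β} (hij : i ≠ j) :
    {p ∈ (univ : Finset V).offDiag | ℓ p.1 = i ∧ ℓ p.2 = j}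
      = ({x | ℓ x = i} : Finset V) ×ˢ ({x | ℓ x = j} : Finset V) := by
  ext ⟨x, y⟩
  simp only [mem_filter, mem_offDiag, mem_product, mem_univ, true_and]
  refine ⟨fun h => h.2, fun h => ⟨?_, h⟩⟩
  rintro rfl
  exact hij (h.1.symm.trans h.2)

section

variable {V β : Type*} [Fintype V] [DecidableEq V] [Fintype β] [DecidableEq β]

theorem comp_perm_mem_labelingsWithClassSizes {c : β → ℕ} {ℓ : V → β}
    (hℓ : ℓ ∈ labelingsWithClassSizes c) (σ : Equiv.Perm V) :
    ℓ ∘ σ ∈ labelingsWithClassSizes c := by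
  simp only [labelingsWithClassSizes, mem_filter, mem_univ, true_and] at hℓ ⊢
  intro k
  rw [← hℓ k]
  simp_rw [card_filter]
  exact Equiv.sum_comp σ fun x => if ℓ x = k then 1 else 0

theorem pairCount_eq_of_ne (c : β → ℕ) (i j : β) {a b a' b' : V} (hab : a ≠ b)
    (hab' : a' ≠ b') : pairCount c i j a b = pairCount c i j a' b' := by
  obtain ⟨σ, hσa, hσb⟩ :=
    MulAction.is_two_pretransitive_iff.mp (Equiv.Perm.isMultiplyPretransitive V 2) hab hab'
  rw [Equiv.Perm.smul_def] at hσa hσb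
  subst hσa hσb
  refine card_nbij' (· ∘ σ.symm) (· ∘ σ) ?_ ?_ (fun _ _ => by ext; simp) (fun _ _ => by ext; simp)
  all_goals
    intro ℓ hℓ
    simp only [mem_coe, mem_filter] at hℓ ⊢
    exact ⟨comp_perm_mem_labelingsWithClassSizes hℓ.1 _, by simpa using hℓ.2⟩

theorem sum_offDiag_pairCount (c : β → ℕ) {i j : β} (hij : i ≠ j) :
    ∑ p ∈ (univ : Finset V).offDiag, pairCount c i j p.1 p.2
      = #(labelingsWithClassSizes (V := V) c) * (c i * c j) := by
  have hcount : ∀ ℓ ∈ labelingsWithClassSizes (V := V) c,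
      #{p ∈ univ.offDiag | ℓ p.1 = i ∧ ℓ p.2 = j} = c i * c j := by
    intro ℓ hℓ
    simp only [labelingsWithClassSizes, mem_filter, mem_univ, true_and] at hℓ
    rw [filter_offDiag_eq_product ℓ hij, card_product, hℓ i, hℓ j]
  calc ∑ p ∈ (univ : Finset V).offDiag, pairCount c i j p.1 p.2
      = ∑ ℓ ∈ labelingsWithClassSizes c, #{p ∈ univ.offDiag | ℓ p.1 = i ∧ ℓ p.2 = j} := by
        simp_rw [pairCount, card_filter]
        exact sum_comm
    _ = #(labelingsWithClassSizes c) * (c i * c j) := by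
        rw [sum_congr rfl hcount, sum_const, smul_eq_mul]

theorem card_mul_pred_mul_pairCount (c : β → ℕ) {i j : β} (hij : i ≠ j) {a b : V}
    (hab : a ≠ b) :
    Fintype.card V * (Fintype.card V - 1) * pairCount c i j a b
      = #(labelingsWithClassSizes (V := V) c) * (c i * c j) := by
  rw [← sum_offDiag_pairCount c hij,
    sum_congr rfl fun p hp => pairCount_eq_of_ne c i j (mem_offDiag.mp hp).2.2 hab,
    sum_const, smul_eq_mul, offDiag_card, card_univ, Nat.mul_sub_one]

theorem sum_cellCount_eq (c : β → ℕ) (i j : β) (nn : V → V) (hnn : ∀ x, nn x ≠ x)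
    {a b : V} (hab : a ≠ b) :
    ∑ ℓ ∈ labelingsWithClassSizes c, cellCount nn i j ℓ
      = Fintype.card V * pairCount c i j a b := by
  calc ∑ ℓ ∈ labelingsWithClassSizes c, cellCount nn i j ℓ
      = ∑ x, pairCount c i j x (nn x) := by
        simp_rw [cellCount, pairCount, card_filter]
        exact sum_comm
    _ = Fintype.card V * pairCount c i j a b := by
        rw [Fintype.sum_congr _ _ fun x => pairCount_eq_of_ne c i j (hnn x).symm hab,
          sum_const, smul_eq_mul, card_univ]

theorem labelingsWithClassSizes_nonempty {c : β → ℕ} (hc : ∑ k, c k = Fintype.card V) :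
    (labelingsWithClassSizes (V := V) c).Nonempty := by
  obtain ⟨e⟩ : Nonempty (V ≃ Σ k, Fin (c k)) :=
    Fintype.card_eq.mp (by rw [Fintype.card_sigma]; simp [hc])
  refine ⟨fun x => (e x).1, ?_⟩
  simp only [labelingsWithClassSizes, mem_filter, mem_univ, true_and]
  intro k
  rw [card_filter, e.sum_comp fun s => if s.1 = k then 1 else 0, Fintype.sum_sigma]
  simp [apply_ite card]

theorem sum_cellCount_div_card_labelingsWithClassSizes (nn : V → V) (hnn : ∀ x, nn x ≠ x)
    (hn : 2 ≤ Fintype.card V) {c : β → ℕ} (hc : ∑ k, c k = Fintype.card V) {i j : β}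
    (hij : i ≠ j) :
    (∑ ℓ ∈ labelingsWithClassSizes c, (cellCount nn i j ℓ : ℝ))
      / #(labelingsWithClassSizes (V := V) c)
      = c i * c j / (Fintype.card V - 1) := by
  obtain ⟨a, b, hab⟩ := Fintype.exists_pair_of_one_lt_card hn
  have hL : (#(labelingsWithClassSizes (V := V) c) : ℝ) ≠ 0 := by
    exact_mod_cast (labelingsWithClassSizes_nonempty hc).card_pos.ne'
  have hn1 : (Fintype.card V : ℝ) - 1 ≠ 0 := by
    have : (2 : ℝ) ≤ Fintype.card V := by exact_mod_cast hn
    linarith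
  have key : (Fintype.card V : ℝ) * (Fintype.card V - 1) * pairCount c i j a b
      = #(labelingsWithClassSizes (V := V) c) * (c i * c j) := by
    have h := congrArg (Nat.cast : ℕ → ℝ) (card_mul_pred_mul_pairCount c hij hab)
    push_cast [Nat.cast_pred (by omega : 0 < Fintype.card V)] at h
    exact h
  rw [← Nat.cast_sum, sum_cellCount_eq c i j nn hnn hab, Nat.cast_mul]
  field_simp
  linear_combination key

end

/-- Under random labeling (uniform over labelings with fixed class sizes `c`),
the expected off-diagonal NNCT cell count satisfies
`E[N_ij] = n_i n_j / (n - 1)` for `i ≠ j`. -/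
theorem expected_offdiagonal_cell_count_RL
    {V : Type*} [Fintype V] [DecidableEq V]
    (nn : V → V) (hnn : ∀ x, nn x ≠ x)
    (hn : 2 ≤ Fintype.card V)
    (q : ℕ) (c : Fin q → ℕ) (hc : ∑ k, c k = Fintype.card V)
    (i j : Fin q) (hij : i ≠ j) :
    (∑ ℓ ∈ univ.filter (fun ℓ : V → Fin q =>
        ∀ k, (univ.filter (fun x => ℓ x = k)).card = c k),
      ((univ.filter (fun x => ℓ x = i ∧ ℓ (nn x) = j)).card : ℝ))
      / ((univ.filter (fun ℓ : V → Fin q =>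
        ∀ k, (univ.filter (fun x => ℓ x = k)).card = c k)).card : ℝ)
    = (c i : ℝ) * (c j : ℝ) / ((Fintype.card V : ℝ) - 1) := by
  -- `congr` matches `Nat.decidableForallFin` here with `Fintype.decidableForallFintype` in
  -- `labelingsWithClassSizes`.
  convert sum_cellCount_div_card_labelingsWithClassSizes nn hnn hn hc hij using 3 <;>
    simp only [labelingsWithClassSizes, cellCount] <;> congr
end

section
/- In the two-class case, both NN-class-specific segregation statistics coincide with Dixon's overall segregation statistic: C_NN(1)(ω) = C_NN(2)(ω) = C(ω) for every outcome ω. -/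
/-!
With the row sums fixed, `N₁₂` and `N₂₁` are constants minus `N₁₁` and `N₂₂`, so their centred
versions are the negatives of those of `N₁₁` and `N₂₂`. Each class-specific pair (centred vector,
covariance matrix) is therefore Dixon's pair `(v, Σ)` transformed to `(D v, D Σ Dᵀ)` by a sign
matrix `D = diag(±1, ∓1)`, and the quadratic form `vᵀ Σ⁻¹ v` is invariant under such a change of
coordinates.
-/

open MeasureTheory Matrix ProbabilityTheory

lemma const_sub_sub_integral_const_sub {Ω : Type*} [MeasurableSpace Ω] {μ : Measure Ω}
    [IsProbabilityMeasure μ] {X : Ω → ℝ} (hX : Integrable X μ) (c : ℝ) (ω : Ω) :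
    (c - X ω) - ∫ ω', (c - X ω') ∂μ = -(X ω - ∫ ω', X ω' ∂μ) := by
  rw [integral_sub (integrable_const c) hX, integral_const, probReal_univ, one_smul]
  ring

lemma dotProduct_inv_mulVec_conj {n R : Type*} [Fintype n] [DecidableEq n] [CommRing R]
    {P : Matrix n n R} (hP : IsUnit P.det) (S : Matrix n n R) (v : n → R) :
    (P *ᵥ v) ⬝ᵥ ((P * S * Pᵀ)⁻¹ *ᵥ (P *ᵥ v)) = v ⬝ᵥ (S⁻¹ *ᵥ v) := by
  have hcancel : P⁻¹ *ᵥ (P *ᵥ v) = v := by rw [mulVec_mulVec, nonsing_inv_mul _ hP, one_mulVec]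
  rw [Matrix.mul_inv_rev, Matrix.mul_inv_rev, ← mulVec_mulVec, ← mulVec_mulVec, hcancel,
    dotProduct_mulVec, ← transpose_nonsing_inv, vecMul_transpose, hcancel]

lemma dotProduct_inv_mulVec_neg_snd {R : Type*} [CommRing R] (a b c d x y : R) :
    ![x, -y] ⬝ᵥ (!![a, -b; -c, d]⁻¹ *ᵥ ![x, -y]) = ![x, y] ⬝ᵥ (!![a, b; c, d]⁻¹ *ᵥ ![x, y]) := by
  have hP : IsUnit (!![1, 0; 0, -1] : Matrix (Fin 2) (Fin 2) R).det := by
    simp [det_fin_two_of]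
  have hv : !![1, 0; 0, -1] *ᵥ ![x, y] = ![x, -y] := by
    ext i; fin_cases i <;> simp
  have hS : !![1, 0; 0, -1] * !![a, b; c, d] * !![1, 0; 0, -1]ᵀ = !![a, -b; -c, d] := by
    ext i j; fin_cases i <;> fin_cases j <;> simp [vecMul, dotProduct, Fin.sum_univ_two]
  rw [← hv, ← hS, dotProduct_inv_mulVec_conj hP]

lemma dotProduct_inv_mulVec_neg_fst {R : Type*} [CommRing R] (a b c d x y : R) :
    ![-x, y] ⬝ᵥ (!![a, -b; -c, d]⁻¹ *ᵥ ![-x, y]) = ![x, y] ⬝ᵥ (!![a, b; c, d]⁻¹ *ᵥ ![x, y]) := by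
  have hv : ![-x, y] = -![x, -y] := by simp
  rw [hv, mulVec_neg, neg_dotProduct, dotProduct_neg, neg_neg, dotProduct_inv_mulVec_neg_snd]

/-- In the two-class case both NN-class-specific statistics coincide with
Dixon's overall segregation statistic: `C_NN(1)(ω) = C_NN(2)(ω) = C(ω)` for
every outcome `ω`. -/
theorem nn_class_specific_eq_overall_two_class
    {Ω : Type*} [MeasurableSpace Ω] (μ : Measure Ω) [IsProbabilityMeasure μ]
    (N11 N22 : Ω → ℝ) (h11 : MemLp N11 2 μ) (h22 : MemLp N22 2 μ)
    (n1 n2 : ℝ) :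
    let N12 : Ω → ℝ := fun ω => n1 - N11 ω
    let N21 : Ω → ℝ := fun ω => n2 - N22 ω
    let m : (Ω → ℝ) → ℝ := fun X => ∫ ω, X ω ∂μ
    let cov : (Ω → ℝ) → (Ω → ℝ) → ℝ :=
      fun X Y => ∫ ω, (X ω - m X) * (Y ω - m Y) ∂μ
    let S0 : Matrix (Fin 2) (Fin 2) ℝ :=
      !![cov N11 N11, cov N11 N22; cov N11 N22, cov N22 N22]
    let S1 : Matrix (Fin 2) (Fin 2) ℝ :=
      !![cov N11 N11, cov N11 N21; cov N11 N21, cov N21 N21]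
    let S2 : Matrix (Fin 2) (Fin 2) ℝ :=
      !![cov N12 N12, cov N12 N22; cov N12 N22, cov N22 N22]
    let C : Ω → ℝ := fun ω =>
      ![N11 ω - m N11, N22 ω - m N22] ⬝ᵥ
        S0⁻¹.mulVec ![N11 ω - m N11, N22 ω - m N22]
    let CNN1 : Ω → ℝ := fun ω =>
      ![N11 ω - m N11, N21 ω - m N21] ⬝ᵥ
        S1⁻¹.mulVec ![N11 ω - m N11, N21 ω - m N21]
    let CNN2 : Ω → ℝ := fun ω =>
      ![N12 ω - m N12, N22 ω - m N22] ⬝ᵥ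
        S2⁻¹.mulVec ![N12 ω - m N12, N22 ω - m N22]
    IsUnit S0.det → ∀ ω : Ω, CNN1 ω = C ω ∧ CNN2 ω = C ω := by
  intro N12 N21 m cov S0 S1 S2 C CNN1 CNN2 _ ω
  have i11 : Integrable N11 μ := h11.integrable one_le_two
  have i22 : Integrable N22 μ := h22.integrable one_le_two
  have hcov (X Y : Ω → ℝ) : cov X Y = cov[X, Y; μ] := rfl
  have hS1 : S1 = !![cov N11 N11, -cov N11 N22; -cov N11 N22, cov N22 N22] := by
    simp only [S1, N21, hcov, covariance_const_sub_left i22, covariance_const_sub_right i22,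
      neg_neg]
  have hS2 : S2 = !![cov N11 N11, -cov N11 N22; -cov N11 N22, cov N22 N22] := by
    simp only [S2, N12, hcov, covariance_const_sub_left i11, covariance_const_sub_right i11,
      neg_neg]
  have hC1 : CNN1 ω = C ω := by
    simp only [CNN1, C, hS1, N21, m, const_sub_sub_integral_const_sub i22]
    exact dotProduct_inv_mulVec_neg_snd ..
  have hC2 : CNN2 ω = C ω := by
    simp only [CNN2, C, hS2, N12, m, const_sub_sub_integral_const_sub i11]
    exact dotProduct_inv_mulVec_neg_fst ..
  exact ⟨hC1, hC2⟩
end
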